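/- Let V be a nonempty closed convex subset of a Banach space X and B a nonempty closed bounded subset of X with rad_V(B) > 0. Then for every ε > 0 and γ > 0 there exists δ > 0 such that cent_V(B, γ+δ) ⊆ cent_V(B, γ) + εB_X. Moreover, δ can be taken to be any positive number less than min{rad_V(B), εγ/(6·rad_V(B) + 4γ)}. -/

import Mathlib

/-!
Fix `x` with `r(x,B) ≤ R + γ + δ`, where `R = rad_V(B)`, and a point `y ∈ V` with
`r(y,B) ≤ R + γ/2`. Since `r(·,B)` is convex, the point `w = x + t (y - x)` of `V`
with `t = 2δ/(2δ + γ)` satisfies `r(w,B) ≤ R + γ`, and `‖x - w‖ = t ‖x - y‖` is small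
because `‖x - y‖ ≤ r(x,B) + r(y,B)`.
-/

open Metric Set Pointwise

/-- `r(x,B) = sup_{b ∈ B} ‖x - b‖`. -/
noncomputable def chebR {X : Type*} [NormedAddCommGroup X] (x : X) (B : Set X) : ℝ :=
  ⨆ b : B, ‖x - (b : X)‖

/-- `rad_V(B) = inf_{v ∈ V} r(v,B)`, the restricted Chebyshev radius. -/
noncomputable def chebRad {X : Type*} [NormedAddCommGroup X] (V B : Set X) : ℝ :=
  ⨅ v : V, chebR (v : X) B

/-- `cent_V(B)`, the set of restricted Chebyshev centers of `B` w.r.t. `V`. -/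
noncomputable def chebCent {X : Type*} [NormedAddCommGroup X] (V B : Set X) : Set X :=
  {v ∈ V | chebR v B ≤ chebRad V B}

/-- `cent_V(B,δ) = {v ∈ V : r(v,B) ≤ rad_V(B) + δ}`. -/
noncomputable def chebCentA {X : Type*} [NormedAddCommGroup X] (V B : Set X) (δ : ℝ) : Set X :=
  {v ∈ V | chebR v B ≤ chebRad V B + δ}

section ChebyshevRadius

variable {X : Type*} [NormedAddCommGroup X] {V B : Set X}

lemma chebR_nonneg (x : X) : 0 ≤ chebR x B :=
  Real.iSup_nonneg fun _ => norm_nonneg _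

lemma norm_sub_le_chebR (hB : Bornology.IsBounded B) (x : X) {b : X} (hb : b ∈ B) :
    ‖x - b‖ ≤ chebR x B := by
  obtain ⟨C, hC⟩ := hB.exists_norm_le
  refine le_ciSup (f := fun b : B => ‖x - (b : X)‖) ⟨‖x‖ + C, ?_⟩ ⟨b, hb⟩
  rintro _ ⟨b', rfl⟩
  exact (norm_sub_le _ _).trans (add_le_add_right (hC b' b'.2) _)

lemma norm_sub_le_chebR_add_chebR (hBne : B.Nonempty) (hB : Bornology.IsBounded B) (x y : X) :
    ‖x - y‖ ≤ chebR x B + chebR y B := by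
  obtain ⟨b, hb⟩ := hBne
  calc ‖x - y‖ ≤ ‖x - b‖ + ‖y - b‖ := by
        simpa only [dist_eq_norm] using dist_triangle_right x y b
    _ ≤ chebR x B + chebR y B :=
      add_le_add (norm_sub_le_chebR hB x hb) (norm_sub_le_chebR hB y hb)

lemma convexOn_chebR [NormedSpace ℝ X] (hBne : B.Nonempty) (hB : Bornology.IsBounded B) :
    ConvexOn ℝ univ fun x : X => chebR x B := by
  have : Nonempty B := hBne.to_subtype
  refine ⟨convex_univ, fun x _ y _ s t hs ht hst => ciSup_le fun b => ?_⟩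
  calc ‖s • x + t • y - (b : X)‖ = ‖s • (x - b) + t • (y - b)‖ := by
        congr 1
        match_scalars <;> linarith
    _ ≤ s * ‖x - b‖ + t * ‖y - b‖ := by
        refine (norm_add_le _ _).trans_eq ?_
        rw [norm_smul_of_nonneg hs, norm_smul_of_nonneg ht]
    _ ≤ s * chebR x B + t * chebR y B := by
        gcongr
        exacts [norm_sub_le_chebR hB x b.2, norm_sub_le_chebR hB y b.2]

lemma chebRad_le_chebR {v : X} (hv : v ∈ V) : chebRad V B ≤ chebR v B :=
  ciInf_le ⟨0, by rintro _ ⟨w, rfl⟩; exact chebR_nonneg _⟩ (⟨v, hv⟩ : V)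

lemma exists_mem_chebR_lt (hVne : V.Nonempty) {η : ℝ} (hη : 0 < η) :
    ∃ y ∈ V, chebR y B < chebRad V B + η := by
  have : Nonempty V := hVne.to_subtype
  obtain ⟨⟨y, hy⟩, hlt⟩ := exists_lt_of_ciInf_lt (lt_add_of_pos_right (chebRad V B) hη)
  exact ⟨y, hy, hlt⟩

lemma exists_mem_chebCentA_norm_sub_le [NormedSpace ℝ X] (hVne : V.Nonempty)
    (hVcx : Convex ℝ V) (hBne : B.Nonempty) (hB : Bornology.IsBounded B) {γ δ : ℝ}
    (hγ : 0 < γ) (hδ : 0 < δ) {x : X} (hx : x ∈ chebCentA V B (γ + δ)) :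
    ∃ w ∈ chebCentA V B γ,
      ‖x - w‖ ≤ δ * (4 * chebRad V B + 3 * γ + 2 * δ) / (2 * δ + γ) := by
  set R := chebRad V B
  obtain ⟨hxV, hxr⟩ := hx
  obtain ⟨y, hyV, hyr⟩ := exists_mem_chebR_lt (B := B) hVne (half_pos hγ)
  set t := 2 * δ / (2 * δ + γ)
  have hden : 0 < 2 * δ + γ := by positivity
  have ht : t * (2 * δ + γ) = 2 * δ := div_mul_cancel₀ _ hden.ne'
  have ht0 : 0 ≤ t := by positivity
  have ht1 : 0 ≤ 1 - t := by
    rw [sub_nonneg, div_le_one hden]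
    linarith
  refine ⟨(1 - t) • x + t • y, ⟨hVcx hxV hyV ht1 ht0 (sub_add_cancel 1 t), ?_⟩, ?_⟩
  · calc chebR ((1 - t) • x + t • y) B ≤ (1 - t) * chebR x B + t * chebR y B :=
          (convexOn_chebR hBne hB).2 trivial trivial ht1 ht0 (sub_add_cancel 1 t)
      _ ≤ (1 - t) * (R + (γ + δ)) + t * (R + γ / 2) := by gcongr
      _ = R + γ := by linear_combination (-1 / 2 : ℝ) * ht
  · have hxy : ‖x - y‖ ≤ (4 * R + 3 * γ + 2 * δ) / 2 := by
      linarith [norm_sub_le_chebR_add_chebR hBne hB x y]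
    calc ‖x - ((1 - t) • x + t • y)‖ = t * ‖x - y‖ := by
          rw [← norm_smul_of_nonneg ht0, smul_sub]
          congr 1
          module
      _ ≤ t * ((4 * R + 3 * γ + 2 * δ) / 2) := by gcongr
      _ = δ * (4 * R + 3 * γ + 2 * δ) / (2 * δ + γ) := by
          simp only [t]
          field_simp

end ChebyshevRadius

lemma mem_add_smul_unitClosedBall {X : Type*} [NormedAddCommGroup X] [NormedSpace ℝ X]
    {S : Set X} {x w : X} {ε : ℝ} (hw : w ∈ S) (hxw : ‖x - w‖ ≤ ε) :
    x ∈ S + ε • closedBall (0 : X) 1 := by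
  rw [smul_unitClosedBall_of_nonneg ((norm_nonneg _).trans hxw)]
  exact ⟨w, hw, x - w, mem_closedBall_zero_iff.2 hxw, add_sub_cancel w x⟩

theorem stmt_6_general {X : Type*} [NormedAddCommGroup X] [NormedSpace ℝ X]
    (V : Set X) (hVne : V.Nonempty) (hVcx : Convex ℝ V)
    (B : Set X) (hBne : B.Nonempty) (hBbd : Bornology.IsBounded B)
    (hrad : 0 < chebRad V B) :
    ∀ ε > (0 : ℝ), ∀ γ > (0 : ℝ),
      (∃ δ > (0 : ℝ), chebCentA V B (γ + δ) ⊆ chebCentA V B γ + ε • closedBall (0 : X) 1) ∧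
      ∀ δ : ℝ, 0 < δ →
        δ < min (chebRad V B) (ε * γ / (6 * chebRad V B + 4 * γ)) →
        chebCentA V B (γ + δ) ⊆ chebCentA V B γ + ε • closedBall (0 : X) 1 := by
  intro ε hε γ hγ
  set R := chebRad V B
  have hsubset : ∀ δ : ℝ, 0 < δ → δ < min R (ε * γ / (6 * R + 4 * γ)) →
      chebCentA V B (γ + δ) ⊆ chebCentA V B γ + ε • closedBall (0 : X) 1 := by
    intro δ hδ hδmin x hx
    obtain ⟨w, hw, hxw⟩ := exists_mem_chebCentA_norm_sub_le hVne hVcx hBne hBbd hγ hδ hx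
    refine mem_add_smul_unitClosedBall hw (hxw.trans ?_)
    have hδR : δ < R := hδmin.trans_le (min_le_left _ _)
    have hδε : δ * (6 * R + 4 * γ) < ε * γ :=
      (lt_div_iff₀ (by positivity)).1 (hδmin.trans_le (min_le_right _ _))
    rw [div_le_iff₀ (by positivity)]
    nlinarith
  have hmin : 0 < min R (ε * γ / (6 * R + 4 * γ)) := lt_min hrad (by positivity)
  exact ⟨⟨_, half_pos hmin, hsubset _ (half_pos hmin) (half_lt_self hmin)⟩, hsubset⟩

/-- for every `ε, γ > 0` there is `δ > 0` with
`cent_V(B,γ+δ) ⊆ cent_V(B,γ) + εB_X`; moreover any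
`0 < δ < min (rad_V B) (εγ/(6 rad_V B + 4γ))` works. -/
theorem stmt_6 {X : Type*} [NormedAddCommGroup X] [NormedSpace ℝ X] [CompleteSpace X]
    (V : Set X) (hVne : V.Nonempty) (hVcl : IsClosed V) (hVcx : Convex ℝ V)
    (B : Set X) (hBne : B.Nonempty) (hBcl : IsClosed B) (hBbd : Bornology.IsBounded B)
    (hrad : 0 < chebRad V B) :
    ∀ ε > (0 : ℝ), ∀ γ > (0 : ℝ),
      (∃ δ > (0 : ℝ), chebCentA V B (γ + δ) ⊆ chebCentA V B γ + ε • closedBall (0 : X) 1) ∧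
      ∀ δ : ℝ, 0 < δ →
        δ < min (chebRad V B) (ε * γ / (6 * chebRad V B + 4 * γ)) →
        chebCentA V B (γ + δ) ⊆ chebCentA V B γ + ε • closedBall (0 : X) 1 :=
  stmt_6_general V hVne hVcx B hBne hBbd hrad
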